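/- arXiv:2305.07459 — 2 statements merged into one kernel-verified Lean document; each statement's English description precedes it below -/
import Mathlib

section
/- Let D ⊂ ℝ³ be a bounded domain, x̂ ∈ S², and K_D = {y ∈ ℝ³ : inf(x̂·D) < x̂·y < sup(x̂·D)}. If y ∉ K_D, then for every ε > 0 the test function φ_{y,ε} is not in the range of L_D. -/
open MeasureTheory Complex
open scoped RealInnerProductSpace

noncomputable section

abbrev E3 := EuclideanSpace ℝ (Fin 3)

def phase (τ ξ : ℝ) : ℂ := Complex.exp (-Complex.I * τ * ξ)

/-- The test function `φ_{y,ε}`. -/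
def testFn (xhat y : E3) (ε tmin tmax : ℝ) (k : ℝ) : ℂ :=
  (((tmax - tmin) * (volume (Metric.ball y ε)).toReal : ℝ) : ℂ)⁻¹ *
    ∫ t in Set.Ioo tmin tmax, ∫ z in Metric.ball y ε, phase k (⟪xhat, z⟫ - t)

open Filter Topology Metric Set

/-!
Write `ξ(z, t) = ⟪x̂, z⟫ - t`. Both `φ_{y,ε}` and `L_D u` are Fourier–Laplace transforms
`τ ↦ ∫ e^{-iτξ} dm` of the pushforward along `ξ` of a finite measure `m`: the uniform
probability on `B(y, ε) × (tmin, tmax)`, resp. `u dx dt` on `D × (tmin, tmax)`. These transforms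
are entire, so equality on `(0, Kb)` gives equality on `ℂ`. At `τ = iσ`, `σ → +∞`, the second
grows at most like `e^{σ (sup(x̂·D) - tmin)}`, while the first, the transform of a positive
measure, grows at least like `e^{σ r}` for every level `r` of `ξ` it charges. If
`sup(x̂·D) ≤ x̂·y`, a small box in `B(y, ε) × (tmin, tmax)` near `z = y + (ε/2) x̂`, `t = tmin`
charges a level `r > sup(x̂·D) - tmin`; the case `x̂·y ≤ inf(x̂·D)` is the mirror image, with
`σ → -∞`.
-/

def fourierLaplace {α : Type*} [MeasurableSpace α] (μ : Measure α) (ξ : α → ℝ)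
    (u : α → ℂ) (τ : ℂ) : ℂ :=
  ∫ p, cexp (-I * τ * ξ p) * u p ∂μ

lemma norm_cexp_neg_I_mul (τ : ℂ) (c : ℝ) : ‖cexp (-I * τ * c)‖ = Real.exp (τ.im * c) := by
  rw [Complex.norm_exp]
  simp [Complex.mul_re]

lemma norm_cexp_neg_I_mul_le {τ : ℂ} {c M T : ℝ} (hc : |c| ≤ M) (hτ : ‖τ‖ ≤ T) :
    ‖cexp (-I * τ * c)‖ ≤ Real.exp (T * M) := by
  rw [norm_cexp_neg_I_mul, Real.exp_le_exp]
  calc τ.im * c ≤ |τ.im| * |c| := (le_abs_self _).trans (abs_mul _ _).le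
    _ ≤ T * M := mul_le_mul ((abs_im_le_norm τ).trans hτ) hc (abs_nonneg _)
        ((norm_nonneg τ).trans hτ)

lemma cexp_neg_I_mul_I_mul (σ c : ℝ) : cexp (-I * (I * σ) * c) = (Real.exp (σ * c) : ℂ) := by
  rw [Complex.ofReal_exp]
  congr 1
  push_cast
  linear_combination (-(σ : ℂ) * c) * I_mul_I

section FourierLaplace

variable {α : Type*} [MeasurableSpace α] {μ : Measure α} {ξ : α → ℝ} {u : α → ℂ} {M : ℝ}

lemma fourierLaplace_neg (τ : ℂ) : fourierLaplace μ (-ξ) u τ = fourierLaplace μ ξ u (-τ) := by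
  simp only [fourierLaplace, Pi.neg_apply, ofReal_neg, neg_mul, mul_neg, neg_neg]

lemma fourierLaplace_I_mul (σ : ℝ) :
    fourierLaplace μ ξ u (I * σ) = ∫ p, (Real.exp (σ * ξ p) : ℂ) * u p ∂μ := by
  simp only [fourierLaplace, cexp_neg_I_mul_I_mul]

lemma integrable_cexp_mul (hξ : AEStronglyMeasurable ξ μ) (hM : ∀ᵐ p ∂μ, |ξ p| ≤ M)
    (hu : Integrable u μ) (τ : ℂ) : Integrable (fun p => cexp (-I * τ * ξ p) * u p) μ := by
  have hcont : Continuous fun c : ℝ => cexp (-I * τ * c) := by fun_prop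
  refine (hu.norm.const_mul (Real.exp (‖τ‖ * M))).mono'
    ((hcont.comp_aestronglyMeasurable hξ).mul hu.aestronglyMeasurable) ?_
  filter_upwards [hM] with p hp
  rw [norm_mul]
  gcongr
  exact norm_cexp_neg_I_mul_le hp le_rfl

theorem differentiable_fourierLaplace (hξ : AEStronglyMeasurable ξ μ)
    (hM : ∀ᵐ p ∂μ, |ξ p| ≤ M) (hu : Integrable u μ) :
    Differentiable ℂ (fourierLaplace μ ξ u) := by
  intro τ₀
  have hderiv : ∀ (c : ℝ) (τ : ℂ), HasDerivAt (fun τ : ℂ => cexp (-I * τ * c))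
      (-I * c * cexp (-I * τ * c)) τ := fun c τ => by
    simpa [mul_comm] using (((hasDerivAt_id τ).const_mul (-I)).mul_const (c : ℂ)).cexp
  refine (hasDerivAt_integral_of_dominated_loc_of_deriv_le (ball_mem_nhds τ₀ one_pos)
    (F' := fun τ p => -I * ξ p * cexp (-I * τ * ξ p) * u p)
    (bound := fun p => M * Real.exp ((‖τ₀‖ + 1) * M) * ‖u p‖)
    (Eventually.of_forall fun τ => (integrable_cexp_mul hξ hM hu τ).aestronglyMeasurable)
    (integrable_cexp_mul hξ hM hu τ₀) ?_ ?_ (hu.norm.const_mul _) ?_).2.differentiableAt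
  · have hcont : Continuous fun c : ℝ => -I * c * cexp (-I * τ₀ * c) := by fun_prop
    exact (hcont.comp_aestronglyMeasurable hξ).mul hu.aestronglyMeasurable
  · filter_upwards [hM] with p hp τ hτ
    have hτ' : ‖τ‖ ≤ ‖τ₀‖ + 1 := by
      have := norm_le_norm_add_norm_sub' τ τ₀
      rw [mem_ball, dist_eq_norm] at hτ
      linarith
    rw [norm_mul, norm_mul, norm_mul]
    simp only [norm_neg, norm_I, one_mul, norm_real, Real.norm_eq_abs]
    gcongr
    · exact (abs_nonneg _).trans hp
    · exact norm_cexp_neg_I_mul_le hp hτ'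
  · exact Eventually.of_forall fun p τ _ => (hderiv (ξ p) τ).mul_const (u p)

lemma norm_fourierLaplace_I_mul_le (hu : Integrable u μ) {σ R : ℝ}
    (hR : ∀ᵐ p ∂μ, σ * ξ p ≤ R) :
    ‖fourierLaplace μ ξ u (I * σ)‖ ≤ Real.exp R * ∫ p, ‖u p‖ ∂μ := by
  rw [fourierLaplace_I_mul, ← integral_const_mul]
  refine norm_integral_le_of_norm_le (hu.norm.const_mul _) ?_
  filter_upwards [hR] with p hp
  rw [norm_mul, norm_real, Real.norm_of_nonneg (Real.exp_pos _).le]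
  gcongr

lemma measureReal_mul_exp_le_norm_fourierLaplace [IsFiniteMeasure μ] (hξ : AEStronglyMeasurable ξ μ)
    (hM : ∀ᵐ p ∂μ, |ξ p| ≤ M) {S : Set α} (hS : MeasurableSet S) {σ r : ℝ}
    (hr : ∀ p ∈ S, σ * r ≤ σ * ξ p) :
    μ.real S * Real.exp (σ * r) ≤ ‖fourierLaplace μ ξ 1 (I * σ)‖ := by
  have hint : Integrable (fun p => Real.exp (σ * ξ p)) μ := by
    refine (integrable_const (Real.exp (|σ| * M))).mono'
      (Real.continuous_exp.comp_aestronglyMeasurable (hξ.const_mul σ)) ?_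
    filter_upwards [hM] with p hp
    rw [Real.norm_of_nonneg (Real.exp_pos _).le, Real.exp_le_exp]
    exact (le_abs_self _).trans ((abs_mul _ _).trans_le (by gcongr))
  have hreal : fourierLaplace μ ξ 1 (I * σ) = ((∫ p, Real.exp (σ * ξ p) ∂μ : ℝ) : ℂ) := by
    simp only [fourierLaplace_I_mul, Pi.one_apply, mul_one]
    exact integral_ofReal
  rw [hreal, norm_real, Real.norm_of_nonneg (integral_nonneg fun _ => (Real.exp_pos _).le)]
  calc μ.real S * Real.exp (σ * r) = ∫ _ in S, Real.exp (σ * r) ∂μ := by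
        rw [setIntegral_const, smul_eq_mul]
    _ ≤ ∫ p in S, Real.exp (σ * ξ p) ∂μ :=
        setIntegral_mono_on (integrableOn_const (measure_ne_top μ S)) hint.integrableOn hS
          fun p hp => Real.exp_le_exp.2 (hr p hp)
    _ ≤ ∫ p, Real.exp (σ * ξ p) ∂μ :=
        setIntegral_le_integral hint (Eventually.of_forall fun _ => (Real.exp_pos _).le)

end FourierLaplace

section Support

variable {α β : Type*} [MeasurableSpace α] [MeasurableSpace β] {μ : Measure α} {ν : Measure β}
  [IsFiniteMeasure ν] {ξ : α → ℝ} {η : β → ℝ} {u : α → ℂ} {N B r : ℝ} {S : Set β}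

theorem measure_eq_zero_of_fourierLaplace_eq_of_ae_le (hη : AEStronglyMeasurable η ν)
    (hN : ∀ᵐ q ∂ν, |η q| ≤ N) (hu : Integrable u μ)
    (hF : fourierLaplace ν η 1 = fourierLaplace μ ξ u) (hξB : ∀ᵐ p ∂μ, ξ p ≤ B) (hBr : B < r)
    (hS : MeasurableSet S) (hηS : ∀ q ∈ S, r ≤ η q) : ν S = 0 := by
  set C := ∫ p, ‖u p‖ ∂μ
  have hbound : ∀ σ : ℝ, 0 ≤ σ → ν.real S ≤ C * Real.exp (σ * (B - r)) := fun σ hσ => by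
    have hlow := measureReal_mul_exp_le_norm_fourierLaplace hη hN hS (σ := σ) (r := r)
      fun q hq => mul_le_mul_of_nonneg_left (hηS q hq) hσ
    have hup := norm_fourierLaplace_I_mul_le hu (σ := σ) (R := σ * B)
      (hξB.mono fun p hp => mul_le_mul_of_nonneg_left hp hσ)
    rw [hF] at hlow
    have hexp : Real.exp (σ * (B - r)) * Real.exp (σ * r) = Real.exp (σ * B) := by
      rw [← Real.exp_add]; ring_nf
    rw [← le_div_iff₀ (Real.exp_pos _)] at hlow
    calc ν.real S ≤ Real.exp (σ * B) * C / Real.exp (σ * r) :=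
          hlow.trans (div_le_div_of_nonneg_right hup (Real.exp_pos _).le)
      _ = C * Real.exp (σ * (B - r)) := by
          rw [← hexp]; field_simp
  have hlim : Tendsto (fun σ => C * Real.exp (σ * (B - r))) atTop (𝓝 0) := by
    simpa using (Real.tendsto_exp_atBot.comp
      (tendsto_id.atTop_mul_const_of_neg (sub_neg.2 hBr))).const_mul C
  have hzero : ν.real S ≤ 0 :=
    ge_of_tendsto hlim ((eventually_ge_atTop 0).mono hbound)
  exact (measureReal_eq_zero_iff).1 (le_antisymm hzero measureReal_nonneg)

theorem measure_eq_zero_of_fourierLaplace_eq_of_ae_ge (hη : AEStronglyMeasurable η ν)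
    (hN : ∀ᵐ q ∂ν, |η q| ≤ N) (hu : Integrable u μ)
    (hF : fourierLaplace ν η 1 = fourierLaplace μ ξ u) (hξB : ∀ᵐ p ∂μ, B ≤ ξ p) (hrB : r < B)
    (hS : MeasurableSet S) (hηS : ∀ q ∈ S, η q ≤ r) : ν S = 0 := by
  refine measure_eq_zero_of_fourierLaplace_eq_of_ae_le (ξ := -ξ) (B := -B) (r := -r) hη.neg
    (hN.mono fun q hq => by rwa [Pi.neg_apply, abs_neg]) hu ?_
    (hξB.mono fun p hp => neg_le_neg hp) (neg_lt_neg hrB) hS fun q hq => neg_le_neg (hηS q hq)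
  ext τ
  rw [fourierLaplace_neg, fourierLaplace_neg, hF]

end Support

theorem Complex.eq_of_eqOn_Ioo {f g : ℂ → ℂ} (hf : Differentiable ℂ f) (hg : Differentiable ℂ g)
    {a b : ℝ} (hab : a < b) (hfg : ∀ x ∈ Ioo a b, f x = g x) : f = g := by
  set x₀ := (a + b) / 2 with hx₀
  have hreal : ∃ᶠ x : ℝ in 𝓝[≠] x₀, f x = g x :=
    (eventually_nhdsWithin_of_eventually_nhds
      (Ioo_mem_nhds (by linarith : a < x₀) (by linarith : x₀ < b))).frequently.mono hfg
  have hofReal : Tendsto ((↑) : ℝ → ℂ) (𝓝[≠] x₀) (𝓝[≠] (x₀ : ℂ)) :=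
    continuous_ofReal.continuousWithinAt.tendsto_nhdsWithin fun x hx => by
      simpa using hx
  exact AnalyticOnNhd.eq_of_frequently_eq (fun z _ => hf.analyticAt z)
    (fun z _ => hg.analyticAt z) (hofReal.frequently hreal)

section InnerProduct

variable {E : Type*} [NormedAddCommGroup E] [InnerProductSpace ℝ E]

lemma exists_ae_restrict_abs_inner_sub_le [MeasurableSpace E] {μ : Measure (E × ℝ)}
    {s : Set (E × ℝ)} (hs : Bornology.IsBounded s) (hsm : MeasurableSet s) (x : E) :
    ∃ M, ∀ᵐ p ∂μ.restrict s, |⟪x, p.1⟫ - p.2| ≤ M := by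
  obtain ⟨R, hR⟩ := hs.exists_norm_le
  refine ⟨‖x‖ * R + R, ae_restrict_of_forall_mem hsm fun p hp => ?_⟩
  calc |⟪x, p.1⟫ - p.2| ≤ |⟪x, p.1⟫| + |p.2| := abs_sub _ _
    _ ≤ ‖x‖ * ‖p.1‖ + ‖p.2‖ := add_le_add (abs_real_inner_le_norm _ _) le_rfl
    _ ≤ ‖x‖ * R + R := by
        gcongr
        · exact (norm_fst_le p).trans (hR p hp)
        · exact (norm_snd_le p).trans (hR p hp)

lemma abs_inner_sub_lt_of_mem_ball {x w z : E} {r : ℝ} (hx : ‖x‖ = 1) (hz : z ∈ ball w r) :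
    |⟪x, z⟫ - ⟪x, w⟫| < r := by
  rw [← inner_sub_right]
  calc |⟪x, z - w⟫| ≤ ‖x‖ * ‖z - w‖ := abs_real_inner_le_norm _ _
    _ < r := by rwa [hx, one_mul, ← dist_eq_norm, ← mem_ball]

lemma inner_add_smul_of_norm_eq_one {x : E} (hx : ‖x‖ = 1) (y : E) (s : ℝ) :
    ⟪x, y + s • x⟫ = ⟪x, y⟫ + s := by
  rw [inner_add_right, real_inner_smul_right, real_inner_self_eq_norm_sq, hx]
  ring

end InnerProduct

lemma norm_phase (k c : ℝ) : ‖phase k c‖ = 1 := by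
  rw [phase, norm_cexp_neg_I_mul, ofReal_im, zero_mul, Real.exp_zero]

lemma testFn_eq_fourierLaplace (xhat y : E3) (ε tmin tmax k : ℝ) :
    testFn xhat y ε tmin tmax k =
      (((tmax - tmin) * (volume (ball y ε)).toReal : ℝ) : ℂ)⁻¹ *
        fourierLaplace (volume.restrict (ball y ε ×ˢ Ioo tmin tmax))
          (fun p : E3 × ℝ => ⟪xhat, p.1⟫ - p.2) 1 k := by
  have hint : IntegrableOn (fun q : ℝ × E3 => phase k (⟪xhat, q.2⟫ - q.1))
      (Ioo tmin tmax ×ˢ ball y ε) (volume.prod volume) := by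
    refine Measure.integrableOn_of_bounded (M := 1) ?_ (by unfold phase; fun_prop)
      (Eventually.of_forall fun q => (norm_phase _ _).le)
    rw [Measure.prod_prod, Real.volume_Ioo]
    exact ENNReal.mul_ne_top ENNReal.ofReal_ne_top measure_ball_lt_top.ne
  rw [testFn, fourierLaplace, ← setIntegral_prod _ hint, Measure.volume_eq_prod,
    ← setIntegral_prod_swap]
  simp only [phase, Pi.one_apply, mul_one, Prod.fst_swap, Prod.snd_swap]

lemma volume_ball_prod_Ioo_pos {E : Type*} [PseudoMetricSpace E] [MeasureSpace E]
    [(volume : Measure E).IsOpenPosMeasure] (w : E) {r s t : ℝ} (hr : 0 < r) (hst : s < t) :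
    0 < volume (ball w r ×ˢ Ioo s t) := by
  rw [Measure.volume_eq_prod, Measure.prod_prod, Real.volume_Ioo]
  exact ENNReal.mul_pos (measure_ball_pos _ _ hr).ne' (ENNReal.ofReal_pos.2 (sub_pos.2 hst)).ne'

instance (y : E3) (ε a b : ℝ) : IsFiniteMeasure (volume.restrict (ball y ε ×ˢ Ioo a b)) :=
  isFiniteMeasure_restrict.2 ((isBounded_ball.prod (isBounded_Ioo a b)).measure_lt_top).ne

section Range

variable {D : Set E3} (hDbdd : Bornology.IsBounded D) (hDmeas : MeasurableSet D)
  {tmin tmax ε : ℝ} {xhat y : E3} {v : E3 × ℝ → ℂ}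

include hDbdd hDmeas in
lemma fourierLaplace_eq_of_testFn_eq {Kb : ℝ} (ht : tmin < tmax) (hK : 0 < Kb) (hε : 0 < ε)
    {u : E3 × ℝ → ℂ} (hu : Integrable u (volume.restrict (D ×ˢ Ioo tmin tmax)))
    (hLu : ∀ τ ∈ Ioo (0 : ℝ) Kb, testFn xhat y ε tmin tmax τ =
      ∫ p in D ×ˢ Ioo tmin tmax, phase τ (⟪xhat, p.1⟫ - p.2) * u p) :
    fourierLaplace (volume.restrict (ball y ε ×ˢ Ioo tmin tmax)) (fun p => ⟪xhat, p.1⟫ - p.2) 1 =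
      fourierLaplace (volume.restrict (D ×ˢ Ioo tmin tmax)) (fun p => ⟪xhat, p.1⟫ - p.2)
        (fun p => ((tmax - tmin) * (volume (ball y ε)).toReal : ℝ) * u p) := by
  have hc : ((tmax - tmin) * (volume (ball y ε)).toReal : ℝ) ≠ 0 :=
    mul_ne_zero (sub_ne_zero.2 ht.ne')
      (ENNReal.toReal_pos (measure_ball_pos _ _ hε).ne' measure_ball_lt_top.ne).ne'
  have hξ : Continuous fun p : E3 × ℝ => ⟪xhat, p.1⟫ - p.2 := by fun_prop
  obtain ⟨N, hN⟩ := exists_ae_restrict_abs_inner_sub_le (isBounded_ball.prod (isBounded_Ioo _ _))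
    (measurableSet_ball.prod measurableSet_Ioo) xhat
  obtain ⟨M, hM⟩ := exists_ae_restrict_abs_inner_sub_le (hDbdd.prod (isBounded_Ioo _ _))
    (hDmeas.prod measurableSet_Ioo) xhat
  refine Complex.eq_of_eqOn_Ioo (differentiable_fourierLaplace hξ.aestronglyMeasurable hN
    (integrable_const 1)) (differentiable_fourierLaplace hξ.aestronglyMeasurable hM
    (hu.const_mul _)) hK fun τ hτ => ?_
  have h := hLu τ hτ
  rw [testFn_eq_fourierLaplace, inv_mul_eq_iff_eq_mul₀ (ofReal_ne_zero.2 hc)] at h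
  rw [h, fourierLaplace, ← integral_const_mul]
  simp only [phase, mul_left_comm]

include hDbdd hDmeas in
lemma fourierLaplace_ball_prod_Ioo_ne_of_sSup_le (ht : tmin < tmax) (hε : 0 < ε)
    (hx : ‖xhat‖ = 1) (hy : sSup ((fun z => ⟪xhat, z⟫) '' D) ≤ ⟪xhat, y⟫)
    (hv : Integrable v (volume.restrict (D ×ˢ Ioo tmin tmax))) :
    fourierLaplace (volume.restrict (ball y ε ×ˢ Ioo tmin tmax)) (fun p => ⟪xhat, p.1⟫ - p.2) 1 ≠
      fourierLaplace (volume.restrict (D ×ˢ Ioo tmin tmax)) (fun p => ⟪xhat, p.1⟫ - p.2) v := by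
  intro hF
  obtain ⟨N, hN⟩ := exists_ae_restrict_abs_inner_sub_le (isBounded_ball.prod (isBounded_Ioo _ _))
    (measurableSet_ball.prod measurableSet_Ioo) xhat
  set δ := min (ε / 8) (tmax - tmin)
  have hδ : 0 < δ := lt_min (by linarith) (by linarith)
  have hδε : δ ≤ ε / 8 := min_le_left _ _
  have hδt : δ ≤ tmax - tmin := min_le_right _ _
  have hsub : ball (y + (ε / 2) • xhat) (ε / 4) ⊆ ball y ε := ball_subset_ball' (by
    rw [dist_self_add_left, norm_smul, hx, Real.norm_of_nonneg (by linarith)]; linarith)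
  refine (volume_ball_prod_Ioo_pos (y + (ε / 2) • xhat) (by linarith : 0 < ε / 4)
    (by linarith : tmin < tmin + δ)).ne' ?_
  rw [← Measure.restrict_eq_self _
    (Set.prod_mono hsub (Ioo_subset_Ioo le_rfl (by linarith : tmin + δ ≤ tmax)))]
  refine measure_eq_zero_of_fourierLaplace_eq_of_ae_le (by fun_prop) hN hv hF
    (B := sSup ((fun z => ⟪xhat, z⟫) '' D) - tmin)
    (ae_restrict_of_forall_mem (hDmeas.prod measurableSet_Ioo) fun p hp => ?_)
    (r := ⟪xhat, y⟫ + ε / 4 - tmin - δ) (by linarith)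
    (measurableSet_ball.prod measurableSet_Ioo) fun p hp => ?_
  · have hbdd : BddAbove ((fun z => ⟪xhat, z⟫) '' D) :=
      ((innerSL ℝ xhat).lipschitz.isBounded_image hDbdd).bddAbove
    linarith [le_csSup hbdd (mem_image_of_mem _ hp.1), hp.2.1]
  · have h := abs_lt.1 (abs_inner_sub_lt_of_mem_ball hx hp.1)
    rw [inner_add_smul_of_norm_eq_one hx] at h
    linarith [hp.2.2]

include hDbdd hDmeas in
lemma fourierLaplace_ball_prod_Ioo_ne_of_le_sInf (ht : tmin < tmax) (hε : 0 < ε)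
    (hx : ‖xhat‖ = 1) (hy : ⟪xhat, y⟫ ≤ sInf ((fun z => ⟪xhat, z⟫) '' D))
    (hv : Integrable v (volume.restrict (D ×ˢ Ioo tmin tmax))) :
    fourierLaplace (volume.restrict (ball y ε ×ˢ Ioo tmin tmax)) (fun p => ⟪xhat, p.1⟫ - p.2) 1 ≠
      fourierLaplace (volume.restrict (D ×ˢ Ioo tmin tmax)) (fun p => ⟪xhat, p.1⟫ - p.2) v := by
  intro hF
  obtain ⟨N, hN⟩ := exists_ae_restrict_abs_inner_sub_le (isBounded_ball.prod (isBounded_Ioo _ _))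
    (measurableSet_ball.prod measurableSet_Ioo) xhat
  set δ := min (ε / 8) (tmax - tmin)
  have hδ : 0 < δ := lt_min (by linarith) (by linarith)
  have hδε : δ ≤ ε / 8 := min_le_left _ _
  have hδt : δ ≤ tmax - tmin := min_le_right _ _
  have hsub : ball (y + (-(ε / 2)) • xhat) (ε / 4) ⊆ ball y ε := ball_subset_ball' (by
    rw [dist_self_add_left, norm_smul, hx, norm_neg, Real.norm_of_nonneg (by linarith)]
    linarith)
  refine (volume_ball_prod_Ioo_pos (y + (-(ε / 2)) • xhat) (by linarith : 0 < ε / 4)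
    (by linarith : tmax - δ < tmax)).ne' ?_
  rw [← Measure.restrict_eq_self _
    (Set.prod_mono hsub (Ioo_subset_Ioo (by linarith : tmin ≤ tmax - δ) le_rfl))]
  refine measure_eq_zero_of_fourierLaplace_eq_of_ae_ge (by fun_prop) hN hv hF
    (B := sInf ((fun z => ⟪xhat, z⟫) '' D) - tmax)
    (ae_restrict_of_forall_mem (hDmeas.prod measurableSet_Ioo) fun p hp => ?_)
    (r := ⟪xhat, y⟫ - ε / 4 - tmax + δ) (by linarith)
    (measurableSet_ball.prod measurableSet_Ioo) fun p hp => ?_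
  · have hbdd : BddBelow ((fun z => ⟪xhat, z⟫) '' D) :=
      ((innerSL ℝ xhat).lipschitz.isBounded_image hDbdd).bddBelow
    linarith [csInf_le hbdd (mem_image_of_mem _ hp.1), hp.2.2]
  · have h := abs_lt.1 (abs_inner_sub_lt_of_mem_ball hx hp.1)
    rw [inner_add_smul_of_norm_eq_one hx] at h
    linarith [hp.2.1]

end Range

theorem stmt_12_general (D : Set E3)
    (hDbdd : Bornology.IsBounded D) (hDmeas : MeasurableSet D)
    (tmin tmax Kb : ℝ) (ht : tmin < tmax) (hK : 0 < Kb)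
    (xhat : E3) (hx : ‖xhat‖ = 1) (y : E3)
    -- `y ∉ K_D`:
    (hy : ¬ (sInf ((fun z => ⟪xhat, z⟫) '' D) < ⟪xhat, y⟫ ∧
             ⟪xhat, y⟫ < sSup ((fun z => ⟪xhat, z⟫) '' D))) :
    -- for every `ε > 0`, `φ_{y,ε}` is not in the range of `L_D`:
    ∀ ε > (0 : ℝ),
      ¬ ∃ u : E3 × ℝ → ℂ,
        MemLp u 2 ((volume : Measure (E3 × ℝ)).restrict (D ×ˢ Set.Ioo tmin tmax)) ∧
        ∀ τ ∈ Set.Ioo (0 : ℝ) Kb,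
          testFn xhat y ε tmin tmax τ =
            ∫ p in D ×ˢ Set.Ioo tmin tmax, phase τ (⟪xhat, p.1⟫ - p.2) * u p := by
  rintro ε hε ⟨u, hu, hLu⟩
  have := isFiniteMeasure_restrict.2
    ((hDbdd.prod (isBounded_Ioo tmin tmax)).measure_lt_top (μ := volume)).ne
  have hu₁ := hu.integrable one_le_two
  have hF := fourierLaplace_eq_of_testFn_eq hDbdd hDmeas ht hK hε hu₁ hLu
  rcases not_and_or.mp hy with hya | hyb
  · exact fourierLaplace_ball_prod_Ioo_ne_of_le_sInf hDbdd hDmeas ht hε hx (not_lt.1 hya)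
      (hu₁.const_mul _) hF
  · exact fourierLaplace_ball_prod_Ioo_ne_of_sSup_le hDbdd hDmeas ht hε hx (not_lt.1 hyb)
      (hu₁.const_mul _) hF

theorem stmt_12 (D : Set E3) (hDopen : IsOpen D) (hDne : D.Nonempty)
    (hDbdd : Bornology.IsBounded D) (hDmeas : MeasurableSet D)
    (tmin tmax Kb : ℝ) (htmin : 0 ≤ tmin) (ht : tmin < tmax) (hK : 0 < Kb)
    (xhat : E3) (hx : ‖xhat‖ = 1) (y : E3)
    -- `y ∉ K_D`:
    (hy : ¬ (sInf ((fun z => ⟪xhat, z⟫) '' D) < ⟪xhat, y⟫ ∧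
             ⟪xhat, y⟫ < sSup ((fun z => ⟪xhat, z⟫) '' D))) :
    -- for every `ε > 0`, `φ_{y,ε}` is not in the range of `L_D`:
    ∀ ε > (0 : ℝ),
      ¬ ∃ u : E3 × ℝ → ℂ,
        MemLp u 2 ((volume : Measure (E3 × ℝ)).restrict (D ×ˢ Set.Ioo tmin tmax)) ∧
        ∀ τ ∈ Set.Ioo (0 : ℝ) Kb,
          testFn xhat y ε tmin tmax τ =
            ∫ p in D ×ˢ Set.Ioo tmin tmax, phase τ (⟪xhat, p.1⟫ - p.2) * u p :=
  stmt_12_general D hDbdd hDmeas tmin tmax Kb ht hK xhat hx y hy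
end
end

section
/- Let w^∞(x̂, k) = (1/√(2π)) ∫_{t_min}^{t_max} ∫_D e^{−ik(x̂·y − t)} S(y,t) dy dt for k ∈ ℝ, let k_c = (k_min + k_max)/2, K = (k_max − k_min)/2, and define F: L²(0,K) → L²(0,K) by (Fφ)(τ) = ∫_0^K w^∞(x̂, k_c + τ − s) φ(s) ds. Then F = L T L*, where (Lu)(τ) = ∫_{t_min}^{t_max} ∫_D e^{−iτ(x̂·y − t)} u(y,t) dy dt, (L*φ)(y,t) = ∫_0^K e^{iτ(x̂·y − t)} φ(τ) dτ, and (Tu)(y,t) = (1/√(2π)) e^{−i k_c(x̂·y − t)} S(y,t) u(y,t). -/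
open MeasureTheory Complex
open scoped RealInnerProductSpace

noncomputable section

/-!
Substituting the definition of `w`, `(Fφ)(τ)` becomes an iterated integral over
`(0, K) × (D × (t_min, t_max))`. The integrand is bounded by a constant times `|φ(s)|`, so Fubini
swaps the two integrals, and the phase factorises as
`e^{-i(k_c + τ - s)ξ} = e^{-iτξ} e^{-ik_c ξ} e^{isξ}`, which is `L 𝒯 L*` read from the inside out.
-/

theorem norm_phase_s14 (τ ξ : ℝ) : ‖phase τ ξ‖ = 1 := by
  simp [phase, Complex.norm_exp]

theorem phase_add_sub (k τ s ξ : ℝ) :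
    phase (k + τ - s) ξ = phase τ ξ * phase k ξ * Complex.exp (Complex.I * s * ξ) := by
  simp only [phase, ← Complex.exp_add]
  congr 1
  push_cast
  ring

@[fun_prop]
theorem measurable_phase : Measurable (fun p : ℝ × ℝ => phase p.1 p.2) := by
  unfold phase
  fun_prop

theorem integral_integral_mul_swap_of_bounded {α β 𝕜 : Type*} [MeasurableSpace α]
    [MeasurableSpace β] [RCLike 𝕜] {μ : Measure α} {ν : Measure β} [SFinite μ]
    [IsFiniteMeasure ν] {F : α → β → 𝕜} {φ : α → 𝕜} {C : ℝ} (hφ : Integrable φ μ)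
    (hF : AEStronglyMeasurable (Function.uncurry F) (μ.prod ν))
    (hFC : ∀ᵐ z ∂(μ.prod ν), ‖Function.uncurry F z‖ ≤ C) :
    ∫ s, (∫ p, F s p ∂ν) * φ s ∂μ = ∫ p, ∫ s, F s p * φ s ∂μ ∂ν := by
  have hint : Integrable (fun z : α × β => F z.1 z.2 * φ z.1) (μ.prod ν) := by
    have hdom : Integrable (fun z : α × β => C * ‖φ z.1‖) (μ.prod ν) := by
      simpa using (hφ.norm.const_mul C).mul_prod (integrable_const (1 : ℝ) : Integrable _ ν)
    refine hdom.mono' (hF.mul (hφ.1.comp_quasiMeasurePreserving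
      Measure.quasiMeasurePreserving_fst)) ?_
    filter_upwards [hFC] with z hz
    rw [norm_mul]
    exact mul_le_mul_of_nonneg_right hz (norm_nonneg _)
  simp_rw [← integral_mul_const]
  exact integral_integral_swap hint

theorem stmt_14_general (D : Set E3) (hDbdd : Bornology.IsBounded D)
    (hDmeas : MeasurableSet D)
    (tmin tmax : ℝ)
    (kmin kmax : ℝ)
    (xhat : E3)
    (S : E3 → ℝ → ℝ)
    (hSmeas : Measurable (fun p : E3 × ℝ => S p.1 p.2))
    (hSbdd : ∃ M : ℝ, ∀ y ∈ D, ∀ t ∈ Set.Icc tmin tmax, |S y t| ≤ M)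
    -- the far-field pattern `w^∞(x̂,k)`:
    (w : ℝ → ℂ)
    (hw : ∀ k : ℝ, w k = ((Real.sqrt (2 * Real.pi) : ℝ) : ℂ)⁻¹ *
      ∫ p in D ×ˢ Set.Ioo tmin tmax, phase k (⟪xhat, p.1⟫ - p.2) * (S p.1 p.2 : ℂ))
    (φ : ℝ → ℂ)
    (hφ : Integrable φ ((volume : Measure ℝ).restrict (Set.Ioo 0 ((kmax - kmin) / 2)))) :
    -- `F = L 𝒯 L*` with `k_c = (k_min+k_max)/2`, `K = (k_max-k_min)/2`:
    ∀ τ ∈ Set.Ioo (0 : ℝ) ((kmax - kmin) / 2),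
      ∫ s in Set.Ioo (0 : ℝ) ((kmax - kmin) / 2), w ((kmin + kmax) / 2 + τ - s) * φ s =
        ∫ p in D ×ˢ Set.Ioo tmin tmax,
          phase τ (⟪xhat, p.1⟫ - p.2) *
            (((Real.sqrt (2 * Real.pi) : ℝ) : ℂ)⁻¹ *
              phase ((kmin + kmax) / 2) (⟪xhat, p.1⟫ - p.2) * (S p.1 p.2 : ℂ) *
              ∫ s in Set.Ioo (0 : ℝ) ((kmax - kmin) / 2),
                Complex.exp (Complex.I * s * (⟪xhat, p.1⟫ - p.2)) * φ s) := by
  intro τ _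
  obtain ⟨M, hM⟩ := hSbdd
  set c : ℂ := ((Real.sqrt (2 * Real.pi) : ℝ) : ℂ)⁻¹
  set kc := (kmin + kmax) / 2
  set A := D ×ˢ Set.Ioo tmin tmax
  have hA : MeasurableSet A := hDmeas.prod measurableSet_Ioo
  have : IsFiniteMeasure (volume.restrict A) := isFiniteMeasure_restrict.2
    (hDbdd.prod (Metric.isBounded_Ioo tmin tmax)).measure_lt_top.ne
  set F : ℝ → E3 × ℝ → ℂ := fun s p => c * phase (kc + τ - s) (⟪xhat, p.1⟫ - p.2) * (S p.1 p.2 : ℂ)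
  have hF : ∀ᵐ z ∂((volume.restrict (Set.Ioo 0 ((kmax - kmin) / 2))).prod (volume.restrict A)),
      ‖Function.uncurry F z‖ ≤ ‖c‖ * M := by
    filter_upwards [Measure.quasiMeasurePreserving_snd.ae (ae_restrict_mem hA)] with z hz
    simp only [F, Function.uncurry, norm_mul, norm_phase_s14, mul_one, Complex.norm_real,
      Real.norm_eq_abs]
    exact mul_le_mul_of_nonneg_left (hM _ hz.1 _ (Set.mem_Icc_of_Ioo hz.2)) (norm_nonneg c)
  calc _ = ∫ s in Set.Ioo (0 : ℝ) ((kmax - kmin) / 2), (∫ p in A, F s p) * φ s := by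
        congr 1 with s
        simp only [F, hw, mul_assoc, integral_const_mul]
    _ = ∫ p in A, ∫ s in Set.Ioo (0 : ℝ) ((kmax - kmin) / 2), F s p * φ s :=
        integral_integral_mul_swap_of_bounded hφ (by fun_prop) hF
    _ = _ := by
        congr 1 with p
        rw [← integral_const_mul, ← integral_const_mul]
        congr 1 with s
        simp only [F, phase_add_sub]
        push_cast
        ring

theorem stmt_14 (D : Set E3) (hDne : D.Nonempty) (hDbdd : Bornology.IsBounded D)
    (hDmeas : MeasurableSet D)
    (tmin tmax : ℝ) (htmin : 0 ≤ tmin) (ht : tmin < tmax)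
    (kmin kmax : ℝ) (hkm : kmin < kmax)
    (xhat : E3) (hx : ‖xhat‖ = 1)
    (S : E3 → ℝ → ℝ)
    (hSmeas : Measurable (fun p : E3 × ℝ => S p.1 p.2))
    (hSbdd : ∃ M : ℝ, ∀ y ∈ D, ∀ t ∈ Set.Icc tmin tmax, |S y t| ≤ M)
    -- the far-field pattern `w^∞(x̂,k)`:
    (w : ℝ → ℂ)
    (hw : ∀ k : ℝ, w k = ((Real.sqrt (2 * Real.pi) : ℝ) : ℂ)⁻¹ *
      ∫ p in D ×ˢ Set.Ioo tmin tmax, phase k (⟪xhat, p.1⟫ - p.2) * (S p.1 p.2 : ℂ))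
    (φ : ℝ → ℂ)
    (hφ : Integrable φ ((volume : Measure ℝ).restrict (Set.Ioo 0 ((kmax - kmin) / 2)))) :
    -- `F = L 𝒯 L*` with `k_c = (k_min+k_max)/2`, `K = (k_max-k_min)/2`:
    ∀ τ ∈ Set.Ioo (0 : ℝ) ((kmax - kmin) / 2),
      ∫ s in Set.Ioo (0 : ℝ) ((kmax - kmin) / 2), w ((kmin + kmax) / 2 + τ - s) * φ s =
        ∫ p in D ×ˢ Set.Ioo tmin tmax,
          phase τ (⟪xhat, p.1⟫ - p.2) *
            (((Real.sqrt (2 * Real.pi) : ℝ) : ℂ)⁻¹ *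
              phase ((kmin + kmax) / 2) (⟪xhat, p.1⟫ - p.2) * (S p.1 p.2 : ℂ) *
              ∫ s in Set.Ioo (0 : ℝ) ((kmax - kmin) / 2),
                Complex.exp (Complex.I * s * (⟪xhat, p.1⟫ - p.2)) * φ s) :=
  stmt_14_general D hDbdd hDmeas tmin tmax kmin kmax xhat S hSmeas hSbdd w hw φ hφ
end
end
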